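/- arXiv:1309.6037 — 5 statements merged into one kernel-verified Lean document; each statement's English description precedes it below -/
import Mathlib

section
/- For x ∈ ℂ with Im(x) < 0 and positive integers s, s', p: −sin(sx)sin(s'x)/(sin(x)sin(px)) = ∑_{ℓ'=0}^∞ e^{−ipx(2ℓ'+1)} ∑_{ℓ=|s'−s|+1, ℓ≡s+s'+1 (mod 2)}^{s'+s−1} (e^{−ixℓ} − e^{ixℓ}). -/
open Complex

/-! With `q = e^{-ix}`, `|q| < 1`, the outer series is the geometric series `q^p / (1 - q^{2p}) =
1 / (2i sin(px))`, and the inner sum is `-2i ∑_j sin(ℓ_j x)`.  The product-to-sum formula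
`2 sin x sin(ℓx) = cos((ℓ-1)x) - cos((ℓ+1)x)` makes `sin x ∑_j sin(ℓ_j x)` telescope to
`sin(sx) sin(s'x)`. -/

namespace Complex

theorem sin_ne_zero_of_im_ne_zero {z : ℂ} (hz : z.im ≠ 0) : sin z ≠ 0 :=
  sin_ne_zero_iff.mpr fun k hk => hz (by simp [hk])

theorem sin_mul_sum_sin_odd (x : ℂ) (d m : ℕ) :
    sin x * ∑ j ∈ Finset.range m, sin (((d : ℂ) + 1 + 2 * j) * x) =
      sin ((d + m : ℕ) * x) * sin (m * x) := by
  have htelescope : ∀ j : ℕ, 2 * (sin x * sin (((d : ℂ) + 1 + 2 * j) * x)) =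
      cos ((d + 2 * j : ℕ) * x) - cos ((d + 2 * (j + 1) : ℕ) * x) := by
    intro j
    rw [cos_sub_cos]
    push_cast
    ring_nf
    rw [sin_neg]
    ring
  have hends : cos (d * x) - cos ((d + 2 * m : ℕ) * x) =
      2 * (sin ((d + m : ℕ) * x) * sin (m * x)) := by
    rw [cos_sub_cos]
    push_cast
    ring_nf
    rw [sin_neg]
    ring
  apply mul_left_cancel₀ (two_ne_zero' ℂ)
  rw [Finset.mul_sum, Finset.mul_sum, ← hends, Finset.sum_congr rfl fun j _ => htelescope j,
    Finset.sum_range_sub' (fun j => cos ((d + 2 * j : ℕ) * x))]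
  simp

theorem exp_neg_I_mul_sub_exp_I_mul (z : ℂ) :
    exp (-I * z) - exp (I * z) = -2 * I * sin z := by
  rw [sin, show -z * I = -I * z by ring, show z * I = I * z by ring]
  ring_nf
  rw [I_sq]
  ring

theorem hasSum_exp_neg_I_mul_odd {z : ℂ} (hz : z.im < 0) :
    HasSum (fun l : ℕ => exp (-I * z * (2 * l + 1))) (1 / (2 * I * sin z)) := by
  set q := exp (-I * z) with hq_def
  have hq : ‖q‖ < 1 := by simpa [hq_def, norm_exp] using hz
  have hq2 : ‖q ^ 2‖ < 1 := by
    rw [norm_pow]; exact pow_lt_one₀ (norm_nonneg _) hq two_ne_zero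
  have hterm : ∀ l : ℕ, exp (-I * z * (2 * l + 1)) = q * (q ^ 2) ^ l := by
    intro l
    rw [hq_def, ← exp_nat_mul, ← exp_nat_mul, ← exp_add]
    push_cast
    ring_nf
  have hsum : q * (1 - q ^ 2)⁻¹ = 1 / (2 * I * sin z) := by
    have h1 : 1 - q ^ 2 ≠ 0 :=
      sub_ne_zero.mpr fun h => lt_irrefl _ (by rwa [← h, norm_one] at hq2)
    have hexp : exp (I * z) = q⁻¹ := by rw [hq_def, neg_mul, exp_neg, inv_inv]
    rw [show 2 * I * sin z = exp (I * z) - q by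
      linear_combination exp_neg_I_mul_sub_exp_I_mul z, hexp]
    field_simp [exp_ne_zero]
  simpa only [hterm, hsum] using (hasSum_geometric_of_norm_lt_one hq2).mul_left q

end Complex

theorem stmt8_general (x : ℂ) (s s' p : ℕ) (hx : x.im < 0)
    (hp : 0 < p) :
    -(Complex.sin ((s : ℂ) * x) * Complex.sin ((s' : ℂ) * x)) /
        (Complex.sin x * Complex.sin ((p : ℂ) * x)) =
      ∑' l' : ℕ, Complex.exp (-I * (p : ℂ) * x * (2 * (l' : ℂ) + 1)) *
        ∑ j ∈ Finset.range (min s s'),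
          (Complex.exp (-I * x * (((max s s' - min s s' : ℕ) : ℂ) + 1 + 2 * (j : ℂ))) -
           Complex.exp (I * x * (((max s s' - min s s' : ℕ) : ℂ) + 1 + 2 * (j : ℂ)))) := by
  set d := max s s' - min s s'
  have hprod : sin (s * x) * sin (s' * x) =
      sin x * ∑ j ∈ Finset.range (min s s'), sin (((d : ℂ) + 1 + 2 * j) * x) := by
    rw [sin_mul_sum_sin_odd, show d + min s s' = max s s' by omega]
    rcases le_total s s' with h | h
    · simp [h, mul_comm]
    · simp [h]
  have hinner : ∀ j : ℕ,
      exp (-I * x * ((d : ℂ) + 1 + 2 * j)) - exp (I * x * ((d : ℂ) + 1 + 2 * j)) =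
        -2 * I * sin (((d : ℂ) + 1 + 2 * j) * x) := by
    intro j
    rw [mul_assoc, mul_assoc, exp_neg_I_mul_sub_exp_I_mul, mul_comm x]
  have hpx : ((p : ℂ) * x).im < 0 := by
    simpa using mul_neg_of_pos_of_neg (Nat.cast_pos.mpr hp : (0 : ℝ) < p) hx
  have hsinx : sin x ≠ 0 := sin_ne_zero_of_im_ne_zero hx.ne
  simp_rw [hinner, ← Finset.mul_sum, mul_assoc (-I) (p : ℂ) x]
  rw [tsum_mul_right, (hasSum_exp_neg_I_mul_odd hpx).tsum_eq, hprod,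
    ← mul_neg, mul_div_mul_left _ _ hsinx]
  generalize ∑ j ∈ Finset.range (min s s'), sin (((d : ℂ) + 1 + 2 * j) * x) = T
  field_simp [I_ne_zero]

/-- `−sin(sx)sin(s'x)/(sin(x)sin(px)) = ∑_{ℓ'=0}^∞ e^{−ipx(2ℓ'+1)} ∑_ℓ (e^{−ixℓ} − e^{ixℓ})`,
where the inner sum runs over `ℓ = |s−s'|+1+2j`, `j = 0, …, min(s,s')−1`. -/
theorem stmt8 (x : ℂ) (s s' p : ℕ) (hx : x.im < 0)
    (hs : 0 < s) (hs' : 0 < s') (hp : 0 < p) :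
    -(Complex.sin ((s : ℂ) * x) * Complex.sin ((s' : ℂ) * x)) /
        (Complex.sin x * Complex.sin ((p : ℂ) * x)) =
      ∑' l' : ℕ, Complex.exp (-I * (p : ℂ) * x * (2 * (l' : ℂ) + 1)) *
        ∑ j ∈ Finset.range (min s s'),
          (Complex.exp (-I * x * (((max s s' - min s s' : ℕ) : ℂ) + 1 + 2 * (j : ℂ))) -
           Complex.exp (I * x * (((max s s' - min s s' : ℕ) : ℂ) + 1 + 2 * (j : ℂ)))) :=
  stmt8_general x s s' p hx hp
end

section
/- Fix an integer p ≥ 2 and r ≤ 0, 1 ≤ s ≤ p−1, and |q| < 1. Then ∑_{n=0}^∞ (q^{p(−r/2+1/2+n+(p−s)/(2p))²} − q^{p(−r/2+1/2+n+(p+s)/(2p))²}) = ∑_{n=0}^∞ (q^{p(r/2+n−s/(2p))²} − q^{p(r/2+n+s/(2p))²}). -/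
/-!
Write `f x = exp (2πiτp x²)`, an even function, `b = r/2 - s/(2p)`, `b' = r/2 + s/(2p)` and
`G k = f (b + k) - f (b' + k)`. The right-hand side is `∑ G n` and the left-hand side is the
same series shifted by `d = 1 - r ∈ ℕ`. Since `b + (d - 1 - j) = -(b' + j)`, evenness of `f`
makes the first `d` terms `f (b + k)` a permutation of the first `d` terms `f (b' + k)`, so
`∑_{k<d} G k = 0` and the shift does not change the sum.
-/

open Complex Finset

theorem tsum_nat_add_eq_of_sum_range_eq_zero {G : Type*} [AddCommGroup G] [TopologicalSpace G]
    [IsTopologicalAddGroup G] [T2Space G] {f : ℕ → G} {k : ℕ} (h : ∑ i ∈ range k, f i = 0) :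
    ∑' n, f (n + k) = ∑' n, f n :=
  tsum_eq_tsum_of_hasSum_iff_hasSum fun {_} => by rw [hasSum_nat_add_iff, h, add_zero]

section EvenFunction

variable {R M : Type*} [CommRing R] [AddCommGroup M] {f : R → M}

theorem Function.Even.sum_range_add_eq_of_add_add_eq_one (hf : f.Even) {b b' : R} {d : ℕ}
    (h : b + b' + d = 1) : ∑ k ∈ range d, f (b + k) = ∑ k ∈ range d, f (b' + k) := by
  rw [← sum_range_reflect]
  refine sum_congr rfl fun j hj => ?_
  have hjd : j + 1 ≤ d := mem_range.mp hj
  have hreflect : b + ((d - 1 - j : ℕ) : R) = -(b' + j) := by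
    rw [Nat.sub_sub, Nat.cast_sub (by omega), Nat.cast_add, Nat.cast_one]
    linear_combination h
  rw [hreflect, hf]

theorem Function.Even.tsum_sub_nat_add_eq_of_add_add_eq_one [TopologicalSpace M]
    [IsTopologicalAddGroup M] [T2Space M] (hf : f.Even) {b b' : R} {d : ℕ} (h : b + b' + d = 1) :
    ∑' n : ℕ, (f (b + (n + d : ℕ)) - f (b' + (n + d : ℕ))) =
      ∑' n : ℕ, (f (b + n) - f (b' + n)) := by
  refine tsum_nat_add_eq_of_sum_range_eq_zero (f := fun k : ℕ => f (b + k) - f (b' + k)) ?_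
  rw [sum_sub_distrib, hf.sum_range_add_eq_of_add_add_eq_one h, sub_self]

end EvenFunction

theorem stmt10_general (p : ℕ) (hp : 2 ≤ p) (r : ℤ) (hr : r ≤ 0) (s : ℕ) (τ : ℂ) :
    ∑' n : ℕ,
      (Complex.exp (2 * (Real.pi : ℂ) * I * τ * (p : ℂ) *
          (-(r : ℂ)/2 + 1/2 + (n : ℂ) + ((p : ℂ) - (s : ℂ))/(2 * (p : ℂ)))^2) -
       Complex.exp (2 * (Real.pi : ℂ) * I * τ * (p : ℂ) *
          (-(r : ℂ)/2 + 1/2 + (n : ℂ) + ((p : ℂ) + (s : ℂ))/(2 * (p : ℂ)))^2)) =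
    ∑' n : ℕ,
      (Complex.exp (2 * (Real.pi : ℂ) * I * τ * (p : ℂ) *
          ((r : ℂ)/2 + (n : ℂ) - (s : ℂ)/(2 * (p : ℂ)))^2) -
       Complex.exp (2 * (Real.pi : ℂ) * I * τ * (p : ℂ) *
          ((r : ℂ)/2 + (n : ℂ) + (s : ℂ)/(2 * (p : ℂ)))^2)) := by
  set f : ℂ → ℂ := fun x => Complex.exp (2 * (Real.pi : ℂ) * I * τ * (p : ℂ) * x ^ 2)
  have hf : f.Even := fun x => by simp only [f, neg_sq]
  obtain ⟨d, hd⟩ : ∃ d : ℕ, (d : ℤ) = 1 - r := ⟨(1 - r).toNat, Int.toNat_of_nonneg (by omega)⟩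
  have hdC : (d : ℂ) = 1 - r := by exact_mod_cast hd
  have hp0 : (p : ℂ) ≠ 0 := by norm_cast; omega
  have hshift := hf.tsum_sub_nat_add_eq_of_add_add_eq_one
    (b := r / 2 - s / (2 * p)) (b' := r / 2 + s / (2 * p)) (d := d) (by rw [hdC]; ring)
  convert hshift using 3 with n <;> push_cast [hdC] <;> congr 3 <;> field_simp <;> ring

/-- The atypical singlet character identity: for `r ≤ 0`, `1 ≤ s ≤ p−1`, `q = e^{2πiτ}`,
`∑_{n≥0} (q^{p(−r/2+1/2+n+(p−s)/(2p))²} − q^{p(−r/2+1/2+n+(p+s)/(2p))²})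
 = ∑_{n≥0} (q^{p(r/2+n−s/(2p))²} − q^{p(r/2+n+s/(2p))²})`. -/
theorem stmt10 (p : ℕ) (hp : 2 ≤ p) (r : ℤ) (hr : r ≤ 0) (s : ℕ)
    (hs1 : 1 ≤ s) (hs2 : s ≤ p - 1) (τ : ℂ) (hτ : 0 < τ.im) :
    ∑' n : ℕ,
      (Complex.exp (2 * (Real.pi : ℂ) * I * τ * (p : ℂ) *
          (-(r : ℂ)/2 + 1/2 + (n : ℂ) + ((p : ℂ) - (s : ℂ))/(2 * (p : ℂ)))^2) -
       Complex.exp (2 * (Real.pi : ℂ) * I * τ * (p : ℂ) *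
          (-(r : ℂ)/2 + 1/2 + (n : ℂ) + ((p : ℂ) + (s : ℂ))/(2 * (p : ℂ)))^2)) =
    ∑' n : ℕ,
      (Complex.exp (2 * (Real.pi : ℂ) * I * τ * (p : ℂ) *
          ((r : ℂ)/2 + (n : ℂ) - (s : ℂ)/(2 * (p : ℂ)))^2) -
       Complex.exp (2 * (Real.pi : ℂ) * I * τ * (p : ℂ) *
          ((r : ℂ)/2 + (n : ℂ) + (s : ℂ)/(2 * (p : ℂ)))^2)) :=
  stmt10_general p hp r hr s τ
end

section
/- With notation as for the regularized singlet characters, for p < s ≤ 2p−1 one has ch[M^ε_{r,s}](τ) = ch[M^ε_{r−1,s−p}](τ) + ch[M^ε_{r,2p−s}](τ) + ch[M^ε_{r+1,s−p}](τ). -/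
open Complex

/-- `α₊ = √(2p)`. -/
noncomputable def alphaP (p : ℕ) : ℂ := (Real.sqrt (2 * p) : ℝ)

/-- `α₋ = −√(2/p)`. -/
noncomputable def alphaM (p : ℕ) : ℂ := -(Real.sqrt (2 / p) : ℝ)

/-- `α₀ = α₊ + α₋`. -/
noncomputable def alpha0 (p : ℕ) : ℂ := alphaP p + alphaM p

/-- `α_{r,s} = −(rα₊ + sα₋ − α₀)/2`. -/
noncomputable def alphaRS (p : ℕ) (r s : ℤ) : ℂ :=
  -((r : ℂ) * alphaP p + (s : ℂ) * alphaM p - alpha0 p) / 2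

/-- The Dedekind eta function `η(τ) = q^{1/24} ∏_{i≥1} (1 − q^i)`, `q = e^{2πiτ}`. -/
noncomputable def dedekindEta (τ : ℂ) : ℂ :=
  Complex.exp ((Real.pi : ℂ) * I * τ / 12) *
    ∏' n : ℕ, (1 - Complex.exp (2 * (Real.pi : ℂ) * I * τ * ((n : ℂ) + 1)))

/-- Regularized typical character `ch[F^ε_λ](τ) = e^{2πε(λ−α₀/2)} q^{(λ−α₀/2)²/2}/η(τ)`. -/
noncomputable def chF (p : ℕ) (ε lam τ : ℂ) : ℂ :=
  Complex.exp (2 * (Real.pi : ℂ) * ε * (lam - alpha0 p / 2)) *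
    Complex.exp ((Real.pi : ℂ) * I * τ * (lam - alpha0 p / 2)^2) / dedekindEta τ

/-- Regularized atypical character
`ch[M^ε_{r,s}](τ) = ∑_{n≥0} (ch[F^ε_{α_{r−2n−1,p−s}}](τ) − ch[F^ε_{α_{r−2n−2,s}}](τ))`. -/
noncomputable def chM (p : ℕ) (ε : ℂ) (r s : ℤ) (τ : ℂ) : ℂ :=
  ∑' n : ℕ, (chF p ε (alphaRS p (r - 2 * (n : ℤ) - 1) ((p : ℤ) - s)) τ -
             chF p ε (alphaRS p (r - 2 * (n : ℤ) - 2) s) τ)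

/-!
Write `M_{r,s}(n)` for the `n`-th summand of `ch[M^ε_{r,s}]`. Summand by summand, the right-hand
side telescopes to `ch[F^ε_{α_{r−2n,2p−s}}] − ch[F^ε_{α_{r−2n−3,s−p}}]`, which the relation
`α_{a+1,b+p} = α_{a,b}` turns into `M_{r,s}(n)`. The series may be split because each family
`n ↦ ch[F^ε_{λ + nα₊}]` is, up to a constant factor, a subfamily of the terms of a Jacobi theta
series with nome parameter `α₊²τ` in the upper half plane.
-/

lemma Real.sqrt_two_mul_eq_mul_sqrt_two_div {x : ℝ} (hx : 0 ≤ x) :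
    √(2 * x) = x * √(2 / x) := by
  rw [← Real.sqrt_sq hx, ← Real.sqrt_mul (sq_nonneg x), Real.sqrt_sq hx]
  congr 1
  rcases eq_or_ne x 0 with rfl | hx
  · simp
  field_simp

lemma alphaP_add_mul_alphaM (p : ℕ) : alphaP p + p * alphaM p = 0 := by
  simp only [alphaP, alphaM, Real.sqrt_two_mul_eq_mul_sqrt_two_div p.cast_nonneg]
  push_cast
  ring

lemma alphaRS_add_one_add (p : ℕ) (a b : ℤ) : alphaRS p (a + 1) (b + p) = alphaRS p a b := by
  unfold alphaRS
  push_cast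
  linear_combination (-1 / 2 : ℂ) * alphaP_add_mul_alphaM p

lemma alphaRS_sub_two_mul_sub (p : ℕ) (r s k : ℤ) (n : ℕ) :
    alphaRS p (r - 2 * n - k) s = alphaRS p (r - k) s + n * alphaP p := by
  unfold alphaRS
  push_cast
  ring

lemma chF_add_mul_eq_jacobiTheta₂_term (p : ℕ) (ε τ x : ℂ) (a : ℝ) (n : ℕ) :
    chF p ε (x + n * a) τ =
      cexp (2 * Real.pi * ε * (x - alpha0 p / 2) + Real.pi * I * τ * (x - alpha0 p / 2) ^ 2) *
        jacobiTheta₂_term n (-I * ε * a + τ * a * (x - alpha0 p / 2)) (a ^ 2 * τ) /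
          dedekindEta τ := by
  unfold chF jacobiTheta₂_term
  rw [← Complex.exp_add, ← Complex.exp_add]
  congr 2
  push_cast
  linear_combination (2 * Real.pi * ε * a * n : ℂ) * Complex.I_sq

lemma summable_chF_add_mul (p : ℕ) (ε : ℂ) {τ : ℂ} (hτ : 0 < τ.im) (x : ℂ) {a : ℝ}
    (ha : 0 < a) : Summable fun n : ℕ ↦ chF p ε (x + n * a) τ := by
  have him : 0 < ((a : ℂ) ^ 2 * τ).im := by
    rw [← Complex.ofReal_pow, Complex.im_ofReal_mul]
    positivity
  have hθ := ((summable_jacobiTheta₂_term_iff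
    (-I * ε * a + τ * a * (x - alpha0 p / 2)) _).mpr him).comp_injective Nat.cast_injective
  simp only [chF_add_mul_eq_jacobiTheta₂_term]
  exact (hθ.mul_left _).div_const _

noncomputable def chMTerm (p : ℕ) (ε : ℂ) (r s : ℤ) (τ : ℂ) (n : ℕ) : ℂ :=
  chF p ε (alphaRS p (r - 2 * (n : ℤ) - 1) ((p : ℤ) - s)) τ -
    chF p ε (alphaRS p (r - 2 * (n : ℤ) - 2) s) τ

lemma chM_eq_tsum_chMTerm (p : ℕ) (ε : ℂ) (r s : ℤ) (τ : ℂ) :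
    chM p ε r s τ = ∑' n, chMTerm p ε r s τ n := rfl

lemma summable_chF_alphaRS_sub_two_mul_sub {p : ℕ} (hp : 0 < p) (ε : ℂ) {τ : ℂ}
    (hτ : 0 < τ.im) (r s k : ℤ) :
    Summable fun n : ℕ ↦ chF p ε (alphaRS p (r - 2 * n - k) s) τ := by
  simp only [alphaRS_sub_two_mul_sub]
  exact summable_chF_add_mul p ε hτ _ (Real.sqrt_pos.mpr (by positivity))

lemma summable_chMTerm {p : ℕ} (hp : 0 < p) (ε : ℂ) {τ : ℂ} (hτ : 0 < τ.im) (r s : ℤ) :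
    Summable (chMTerm p ε r s τ) :=
  (summable_chF_alphaRS_sub_two_mul_sub hp ε hτ r _ 1).sub
    (summable_chF_alphaRS_sub_two_mul_sub hp ε hτ r s 2)

lemma chMTerm_eq_add_add (p : ℕ) (ε : ℂ) (r s : ℤ) (τ : ℂ) (n : ℕ) :
    chMTerm p ε r s τ n =
      chMTerm p ε (r - 1) (s - p) τ n + chMTerm p ε r (2 * p - s) τ n +
        chMTerm p ε (r + 1) (s - p) τ n := by
  have hfirst : alphaRS p (r - 2 * n) (2 * p - s) = alphaRS p (r - 2 * n - 1) (p - s) := by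
    convert alphaRS_add_one_add p (r - 2 * n - 1) (p - s) using 2 <;> ring
  have hlast : alphaRS p (r - 2 * n - 3) (s - p) = alphaRS p (r - 2 * n - 2) s := by
    convert (alphaRS_add_one_add p (r - 2 * n - 3) (s - p)).symm using 2 <;> ring
  simp only [chMTerm]
  rw [show r - 1 - 2 * (n : ℤ) - 1 = r - 2 * n - 2 by ring,
    show r - 1 - 2 * (n : ℤ) - 2 = r - 2 * n - 3 by ring,
    show r + 1 - 2 * (n : ℤ) - 1 = r - 2 * n by ring,
    show r + 1 - 2 * (n : ℤ) - 2 = r - 2 * n - 1 by ring,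
    show (p : ℤ) - (2 * p - s) = s - p by ring, show (p : ℤ) - (s - p) = 2 * p - s by ring,
    hfirst, hlast]
  ring

theorem stmt12_general (p : ℕ) (hp : 2 ≤ p) (ε τ : ℂ) (hτ : 0 < τ.im)
    (r s : ℤ) :
    chM p ε r s τ =
      chM p ε (r - 1) (s - (p : ℤ)) τ + chM p ε r (2 * (p : ℤ) - s) τ +
        chM p ε (r + 1) (s - (p : ℤ)) τ := by
  have hsum := summable_chMTerm (by omega : 0 < p) ε hτ
  simp only [chM_eq_tsum_chMTerm]
  rw [← (hsum _ _).tsum_add (hsum _ _), ← ((hsum _ _).add (hsum _ _)).tsum_add (hsum _ _)]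
  exact tsum_congr (chMTerm_eq_add_add p ε r s τ)

theorem stmt12 (p : ℕ) (hp : 2 ≤ p) (ε τ : ℂ) (hε : ε.re < 0) (hτ : 0 < τ.im)
    (r s : ℤ) (hs1 : (p : ℤ) < s) (hs2 : s ≤ 2 * (p : ℤ) - 1) :
    chM p ε r s τ =
      chM p ε (r - 1) (s - (p : ℤ)) τ + chM p ε r (2 * (p : ℤ) - s) τ +
        chM p ε (r + 1) (s - (p : ℤ)) τ :=
  stmt12_general p hp ε τ hτ r s
end

section
/- Let β±_{r,s} = ((r−1)α₊ ± sα₋)/2. Then the regularized atypical character factorizes as ch[M^ε_{r,s}](τ) = ch[F^ε_{α₀/2−β⁻_{r,s}}](τ)·P_{α₊ε}(−α₊β⁻_{r,s}τ; α₊²τ) − ch[F^ε_{α₀/2−β⁺_{r,s}}](τ)·P_{α₊ε}(−α₊β⁺_{r,s}τ; α₊²τ). -/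
open Complex

/-- Regularized partial theta function. -/
noncomputable def regPartialTheta (ε u τ : ℂ) : ℂ :=
  ∑' n : ℕ, Complex.exp (2 * (Real.pi : ℂ) * I * u * ((n : ℂ) + 1/2)) *
    Complex.exp (2 * (Real.pi : ℂ) * ε * ((n : ℂ) + 1/2)) *
    Complex.exp ((Real.pi : ℂ) * I * τ * ((n : ℂ) + 1/2)^2)

/-- `β⁺_{r,s} = ((r−1)α₊ + sα₋)/2`. -/
noncomputable def betaPlus (p : ℕ) (r s : ℤ) : ℂ := (((r : ℂ) - 1) * alphaP p + (s : ℂ) * alphaM p) / 2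

/-- `β⁻_{r,s} = ((r−1)α₊ − sα₋)/2`. -/
noncomputable def betaMinus (p : ℕ) (r s : ℤ) : ℂ := (((r : ℂ) - 1) * alphaP p - (s : ℂ) * alphaM p) / 2

/-!
If `λ − α₀/2 = −β + α₊ k`, completing the square in `e^{2πε(λ−α₀/2)} q^{(λ−α₀/2)²/2}` factors the Fock
character `ch[F^ε_λ]` as `ch[F^ε_{α₀/2−β}]` times the summand of `P_{α₊ε}(−α₊βτ; α₊²τ)` at `k`.
Because `p α₋ = −α₊`, the two weights in the `n`-th term of `ch[M^ε_{r,s}]` are of this form with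
`β = β∓_{r,s}` and `k = n + 1/2`. Both partial theta series converge, being subseries of a Jacobi theta
series, so the sum splits into the two products.
-/

noncomputable def partialThetaTerm (ε u τ k : ℂ) : ℂ :=
  exp (2 * (Real.pi : ℂ) * I * u * k) * exp (2 * (Real.pi : ℂ) * ε * k) *
    exp ((Real.pi : ℂ) * I * τ * k ^ 2)

lemma regPartialTheta_eq_tsum (ε u τ : ℂ) :
    regPartialTheta ε u τ = ∑' n : ℕ, partialThetaTerm ε u τ ((n : ℂ) + 1 / 2) :=
  rfl

lemma summable_partialThetaTerm (ε u : ℂ) {τ : ℂ} (hτ : 0 < τ.im) :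
    Summable fun n : ℕ => partialThetaTerm ε u τ ((n : ℂ) + 1 / 2) := by
  have hθ : Summable fun n : ℤ => jacobiTheta₂_term n (u - I * ε + τ / 2) τ :=
    (summable_jacobiTheta₂_term_iff _ _).mpr hτ
  refine ((hθ.comp_injective Nat.cast_injective).mul_left
      (exp ((Real.pi : ℂ) * I * u + (Real.pi : ℂ) * ε + (Real.pi : ℂ) * I * τ / 4))).congr fun n => ?_
  simp only [Function.comp, jacobiTheta₂_term, partialThetaTerm, ← exp_add]
  congr 1
  push_cast
  ring_nf
  rw [I_sq]
  ring

lemma natCast_mul_alphaM {p : ℕ} (hp : p ≠ 0) : (p : ℂ) * alphaM p = -alphaP p := by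
  have hp0 : (0 : ℝ) < p := by positivity
  have hsqrt : (p : ℝ) * √(2 / p) = √(2 * p) := by
    rw [← Real.sqrt_sq hp0.le, ← Real.sqrt_mul (sq_nonneg _)]
    congr 1
    field_simp
    rw [Real.sq_sqrt (by positivity)]
  simp only [alphaM, alphaP, ← hsqrt]
  push_cast
  ring

lemma alphaP_sq (p : ℕ) : alphaP p ^ 2 = ((2 * p : ℝ) : ℂ) := by
  rw [alphaP, ← ofReal_pow, Real.sq_sqrt (by positivity)]

lemma alphaRS_sub_half_alpha0_of_sub_one {p : ℕ} (hp : p ≠ 0) (r s : ℤ) (n : ℕ) :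
    alphaRS p (r - 2 * n - 1) (p - s) - alpha0 p / 2 =
      -betaMinus p r s + alphaP p * ((n : ℂ) + 1 / 2) := by
  simp only [alphaRS, betaMinus, alpha0]
  push_cast
  linear_combination (-1 / 2 : ℂ) * natCast_mul_alphaM hp

lemma alphaRS_sub_half_alpha0_of_sub_two (p : ℕ) (r s : ℤ) (n : ℕ) :
    alphaRS p (r - 2 * n - 2) s - alpha0 p / 2 =
      -betaPlus p r s + alphaP p * ((n : ℂ) + 1 / 2) := by
  simp only [alphaRS, betaPlus, alpha0]
  push_cast
  ring

lemma chF_eq_mul_partialThetaTerm (p : ℕ) (ε τ : ℂ) {lam a b k : ℂ}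
    (h : lam - alpha0 p / 2 = -b + a * k) :
    chF p ε lam τ =
      chF p ε (alpha0 p / 2 - b) τ * partialThetaTerm (a * ε) (-a * b * τ) (a ^ 2 * τ) k := by
  simp only [chF, partialThetaTerm, h, sub_sub_cancel_left, div_mul_eq_mul_div, ← exp_add]
  congr 2
  ring

theorem stmt13_general (p : ℕ) (hp : 2 ≤ p) (ε τ : ℂ) (hτ : 0 < τ.im)
    (r s : ℤ) :
    chM p ε r s τ =
      chF p ε (alpha0 p / 2 - betaMinus p r s) τ *
        regPartialTheta (alphaP p * ε) (-(alphaP p) * betaMinus p r s * τ) ((alphaP p)^2 * τ) -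
      chF p ε (alpha0 p / 2 - betaPlus p r s) τ *
        regPartialTheta (alphaP p * ε) (-(alphaP p) * betaPlus p r s * τ) ((alphaP p)^2 * τ) := by
  have hp0 : p ≠ 0 := by omega
  have hτ' : 0 < ((alphaP p) ^ 2 * τ).im := by
    rw [alphaP_sq, im_ofReal_mul]
    positivity
  have hsummand : ∀ n : ℕ,
      chF p ε (alphaRS p (r - 2 * n - 1) (p - s)) τ - chF p ε (alphaRS p (r - 2 * n - 2) s) τ =
        chF p ε (alpha0 p / 2 - betaMinus p r s) τ * partialThetaTerm (alphaP p * ε)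
          (-(alphaP p) * betaMinus p r s * τ) ((alphaP p) ^ 2 * τ) ((n : ℂ) + 1 / 2) -
        chF p ε (alpha0 p / 2 - betaPlus p r s) τ * partialThetaTerm (alphaP p * ε)
          (-(alphaP p) * betaPlus p r s * τ) ((alphaP p) ^ 2 * τ) ((n : ℂ) + 1 / 2) := fun n => by
    rw [chF_eq_mul_partialThetaTerm p ε τ (alphaRS_sub_half_alpha0_of_sub_one hp0 r s n),
      chF_eq_mul_partialThetaTerm p ε τ (alphaRS_sub_half_alpha0_of_sub_two p r s n)]
  rw [chM, tsum_congr hsummand,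
    ((summable_partialThetaTerm _ _ hτ').mul_left _).tsum_sub
      ((summable_partialThetaTerm _ _ hτ').mul_left _),
    tsum_mul_left, tsum_mul_left, regPartialTheta_eq_tsum, regPartialTheta_eq_tsum]

theorem stmt13 (p : ℕ) (hp : 2 ≤ p) (ε τ : ℂ) (hε : ε.re < 0) (hτ : 0 < τ.im)
    (r s : ℤ) (hs1 : 1 ≤ s) (hs2 : s ≤ (p : ℤ)) :
    chM p ε r s τ =
      chF p ε (alpha0 p / 2 - betaMinus p r s) τ *
        regPartialTheta (alphaP p * ε) (-(alphaP p) * betaMinus p r s * τ) ((alphaP p)^2 * τ) -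
      chF p ε (alpha0 p / 2 - betaPlus p r s) τ *
        regPartialTheta (alphaP p * ε) (-(alphaP p) * betaPlus p r s * τ) ((alphaP p)^2 * τ) :=
  stmt13_general p hp ε τ hτ r s
end

section
/- Define for Re(ε) < 0 the quantum dimensions T(λ) = q_ε^{2λ−α₀} · ∑_{ℓ=−p+1, ℓ≡p+1 (2)}^{p−1} q_ε^{α₋ℓ} (typical) and D(r,s) = q_ε^{−(r−1)α₊} · ∑_{ℓ=−s+1, ℓ≡s+1 (2)}^{s−1} q_ε^{α₋ℓ} (atypical), q_ε = e^{πε}. Then D(r,s)·T(μ) = ∑_{ℓ=−s+2, ℓ≡s (2)}^{s} T(μ + α_{r,ℓ}), where α_{r,ℓ} = −(rα₊ + ℓα₋ − α₀)/2. -/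
open Complex

/-- Regularized atypical quantum dimension
`D(r,s) = q_ε^{−(r−1)α₊} ∑_{ℓ=−s+1, ℓ≡s+1 (2)}^{s−1} q_ε^{α₋ℓ}`, `q_ε = e^{πε}`,
parametrizing `ℓ = −s+1+2j`. -/
noncomputable def qdimM (p : ℕ) (ε : ℂ) (r : ℤ) (s : ℕ) : ℂ :=
  Complex.exp ((Real.pi : ℂ) * ε * (-((r : ℂ) - 1) * alphaP p)) *
    ∑ j ∈ Finset.range s, Complex.exp ((Real.pi : ℂ) * ε * alphaM p * (-(s : ℂ) + 1 + 2 * (j : ℂ)))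

/-- Regularized typical quantum dimension
`T(λ) = q_ε^{2λ−α₀} ∑_{ℓ=−p+1, ℓ≡p+1 (2)}^{p−1} q_ε^{α₋ℓ}`, parametrizing `ℓ = −p+1+2j`. -/
noncomputable def qdimF (p : ℕ) (ε lam : ℂ) : ℂ :=
  Complex.exp ((Real.pi : ℂ) * ε * (2 * lam - alpha0 p)) *
    ∑ j ∈ Finset.range p, Complex.exp ((Real.pi : ℂ) * ε * alphaM p * (-(p : ℂ) + 1 + 2 * (j : ℂ)))

theorem stmt17 (p : ℕ) (hp : 2 ≤ p) (ε : ℂ) (hε : ε.re < 0) (r : ℤ) (s : ℕ)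
    (hs1 : 1 ≤ s) (hsp : s ≤ p) (μ : ℂ) :
    qdimM p ε r s * qdimF p ε μ =
      ∑ j ∈ Finset.range s, qdimF p ε (μ + alphaRS p r (-(s : ℤ) + 2 + 2 * (j : ℤ))) := by
  simp only [qdimM, qdimF, alphaRS, alpha0]
  rw [← Finset.sum_mul, mul_mul_mul_comm, ← mul_assoc]
  congr 1
  rw [Finset.mul_sum]
  have key : ∀ f g : ℕ → ℂ, (∀ j ∈ Finset.range s, g j = f (s - 1 - j)) →
      ∑ j ∈ Finset.range s, f j = ∑ j ∈ Finset.range s, g j := by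
    intro f g h
    rw [Finset.sum_congr rfl h, Finset.sum_range_reflect]
  refine key _ _ fun j hj => ?_
  rw [← Complex.exp_add, ← Complex.exp_add]
  have hj' : j < s := Finset.mem_range.mp hj
  have h1 : ((s - 1 - j : ℕ) : ℂ) = (s : ℂ) - 1 - (j : ℂ) := by
    have : (1 + j) ≤ s := by omega
    rw [Nat.sub_sub, Nat.cast_sub this]; push_cast; ring
  rw [h1]
  congr 1
  push_cast
  ring
end
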